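/- Let f be a t-sparse multilinear polynomial on {0,1}^n with real coefficients, S ⊆ [n], and define f_S(x) = Σ_{T ⊇ S} c_T ∏_{i ∈ T∖S} x_i (a polynomial in the variables outside S). Let D be a locally α-smooth distribution. If f_S contains a monomial with non-zero coefficient of degree at most d − |S|, then Pr_{x∼D_{\bar{S}}}[f_S(x) ≠ 0] ≥ (1/(1+α))^{d − |S| + log₂ t}. -/

import Mathlib

/-!
Write `f = f₀ + x_i f₁` with `f₀ = f|_{x_i=0}` and `f₁ = ∂f/∂x_i`. Local smoothness gives each
point of a pair `y[i:=0], y[i:=1]` at least a `1/(1+α)` share of the pair's mass, so fixing `x_i`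
costs one factor `1/(1+α)`. Given a nonzero monomial `T ∋ i`, either `T \ {i}` is nonzero as well,
or setting `x_i = 1` makes `T \ {i}` a monomial of `f|_{x_i=1}` with coefficient `c_T`; this pays
`|T|` factors. For a nonzero constant term, induct on the variables: if `f|_{x_i=1}` keeps a
nonzero constant term, recurse in both halves, each with at most `t` terms; otherwise `f₀` and
`f₁` both have nonzero constant terms and at most `t` terms together, so one of them, `g`, has at
most `t/2` terms, and `g(y) ≠ 0` forces `f` to be nonzero at `y[i:=0]` or `y[i:=1]`. One factor
then pays for halving the sparsity, which gives `log₂ t` factors in all.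
-/

open Finset Function

section Hamming

variable {ι β : Type*} [Fintype ι] [DecidableEq ι] [DecidableEq β]

lemma hammingDist_update_update_le (x x' : ι → β) (i : ι) (a : β) :
    hammingDist (update x i a) (update x' i a) ≤ hammingDist x x' := by
  refine card_le_card fun j => ?_
  by_cases hj : j = i
  · simp [hj]
  · simp [update_of_ne hj]

lemma hammingDist_update_update_le_one (x : ι → β) (i : ι) (a b : β) :
    hammingDist (update x i a) (update x i b) ≤ 1 := by
  refine card_le_one.2 fun j hj k hk => ?_
  simp only [mem_filter, mem_univ, true_and] at hj hk
  by_contra hjk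
  rcases eq_or_ne j i with rfl | hji
  · exact hk (by simp [update_of_ne (Ne.symm hjk)])
  · exact hj (by simp [update_of_ne hji])

end Hamming

lemma sum_update_false_add_update_true {ι M : Type*} [Fintype ι] [DecidableEq ι]
    [AddCommMonoid M] (i : ι) (F : (ι → Bool) → M) :
    ∑ x, (F (update x i false) + F (update x i true)) = 2 • ∑ x, F x := by
  have hpair : ∀ x, F (update x i false) + F (update x i true) = F x + F (update x i !x i) := by
    intro x
    cases h : x i
    · rw [← h, update_eq_self, h, Bool.not_false]
    · rw [← h, update_eq_self, add_comm, h, Bool.not_true]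
  have hflip : Involutive fun x : ι → Bool => update x i !x i := fun x => by simp
  rw [sum_congr rfl fun x _ => hpair x, sum_add_distrib, two_nsmul,
    Fintype.sum_bijective _ hflip.bijective (fun x => F (update x i !x i)) F fun _ => rfl]

lemma two_mul_sum_eq_sum_update_add_sum_update {ι : Type*} [Fintype ι] [DecidableEq ι]
    (μ : (ι → Bool) → ℝ) (i : ι) :
    2 * ∑ x, μ x = ∑ x, μ (update x i false) + ∑ x, μ (update x i true) := by
  rw [two_mul, ← two_nsmul, ← sum_update_false_add_update_true i, sum_add_distrib]

lemma forall_subset_of_subset_image_erase {ι : Type*} [DecidableEq ι]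
    {𝒜 ℬ : Finset (Finset ι)} {i : ι} {V : Finset ι} (h𝒜 : 𝒜 ⊆ ℬ.image (·.erase i))
    (hℬ : ∀ U ∈ ℬ, U ⊆ insert i V) : ∀ U ∈ 𝒜, U ⊆ V := by
  intro U hU
  obtain ⟨W, hW, rfl⟩ := mem_image.1 (h𝒜 hU)
  exact subset_insert_iff.1 (hℬ W hW)

lemma rpow_logb_two_le_of_le {q : ℝ} (hq0 : 0 < q) (hq1 : q ≤ 1) {s t : ℕ} (hs : 0 < s)
    (hst : s ≤ t) : q ^ Real.logb 2 t ≤ q ^ Real.logb 2 s :=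
  Real.rpow_le_rpow_of_exponent_ge hq0 hq1
    (Real.logb_le_logb_of_le one_lt_two (by exact_mod_cast hs) (by exact_mod_cast hst))

lemma rpow_logb_two_le_mul_of_two_mul_le {q : ℝ} (hq0 : 0 < q) (hq1 : q ≤ 1) {s t : ℕ}
    (hs : 0 < s) (hst : 2 * s ≤ t) : q ^ Real.logb 2 t ≤ q * q ^ Real.logb 2 s := by
  have hlog : Real.logb 2 (2 * s : ℕ) = 1 + Real.logb 2 s := by
    rw [Nat.cast_mul, Nat.cast_ofNat, Real.logb_mul two_ne_zero (by positivity),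
      Real.logb_self_eq_one one_lt_two]
  calc q ^ Real.logb 2 t ≤ q ^ Real.logb 2 (2 * s : ℕ) :=
        rpow_logb_two_le_of_le hq0 hq1 (by omega) hst
    _ = q * q ^ Real.logb 2 s := by rw [hlog, Real.rpow_add hq0, Real.rpow_one]

namespace Multilinear

variable {ι R : Type*} [Fintype ι] [CommSemiring R]

def eval (b : Finset ι → R) (x : ι → Bool) : R :=
  ∑ U, b U * ∏ j ∈ U, if x j then 1 else 0

lemma eval_add (b b' : Finset ι → R) (x : ι → Bool) :
    eval (b + b') x = eval b x + eval b' x := by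
  simp only [eval, Pi.add_apply, add_mul, sum_add_distrib]

section Terms

variable [DecidableEq R]

def terms (b : Finset ι → R) : Finset (Finset ι) :=
  univ.filter fun U => b U ≠ 0

lemma mem_terms {b : Finset ι → R} {U : Finset ι} : U ∈ terms b ↔ b U ≠ 0 := by
  simp [terms]

lemma eval_eq_apply_empty (b : Finset ι → R) (hb : ∀ U ∈ terms b, U ⊆ ∅) (x : ι → Bool) :
    eval b x = b ∅ := by
  rw [eval, sum_eq_single ∅ (fun U _ hU => ?_) (fun h => absurd (mem_univ _) h)]
  · simp
  · rw [of_not_not (mt (fun h => subset_empty.1 (hb U (mem_terms.2 h))) hU), zero_mul]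

end Terms

variable [DecidableEq ι]

/-- `restrict b i c` and `pderiv b i` are the coefficients of `f|_{x_i = c}` and `∂f/∂x_i`. -/
def restrict (b : Finset ι → R) (i : ι) (c : Bool) (U : Finset ι) : R :=
  if i ∈ U then 0 else b U + if c then b (insert i U) else 0

def pderiv (b : Finset ι → R) (i : ι) (U : Finset ι) : R :=
  if i ∈ U then 0 else b (insert i U)

/-- The coefficients of `f_S`. -/
def quotient (b : Finset ι → R) (S U : Finset ι) : R :=
  if U ⊆ Sᶜ then b (S ∪ U) else 0

omit [Fintype ι] in
lemma restrict_true (b : Finset ι → R) (i : ι) :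
    restrict b i true = restrict b i false + pderiv b i := by
  ext U
  by_cases hiU : i ∈ U <;> simp [restrict, pderiv, hiU]

lemma eval_eq_sum_powerset_erase (b : Finset ι → R) (i : ι) (y : ι → Bool) :
    eval b y = ∑ U ∈ (univ.erase i).powerset,
      (b U + if y i then b (insert i U) else 0) * ∏ j ∈ U, if y j then 1 else 0 := by
  have huniv : (univ : Finset (Finset ι)) = (insert i (univ.erase i)).powerset := by
    rw [insert_erase (mem_univ i), powerset_univ]
  rw [eval, huniv, sum_powerset_insert (notMem_erase i univ), ← sum_add_distrib]
  refine sum_congr rfl fun U hU => ?_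
  have hiU : i ∉ U := fun h => notMem_erase i univ (mem_powerset.1 hU h)
  rw [prod_insert hiU]
  split_ifs <;> ring

lemma eval_update (b : Finset ι → R) (i : ι) (x : ι → Bool) (c : Bool) :
    eval b (update x i c) = eval (restrict b i c) x := by
  rw [eval_eq_sum_powerset_erase b i, eval_eq_sum_powerset_erase _ i]
  refine sum_congr rfl fun U hU => ?_
  have hiU : i ∉ U := fun h => notMem_erase i univ (mem_powerset.1 hU h)
  have hprod : ∏ j ∈ U, (if update x i c j then (1 : R) else 0) =
      ∏ j ∈ U, if x j then 1 else 0 :=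
    prod_congr rfl fun j hj => by rw [update_of_ne (ne_of_mem_of_not_mem hj hiU)]
  simp [restrict, hiU, hprod]

lemma eval_quotient (b : Finset ι → R) (S : Finset ι) (x : ι → Bool) :
    eval (quotient b S) x = ∑ U ∈ Sᶜ.powerset, b (S ∪ U) * ∏ j ∈ U, if x j then 1 else 0 := by
  have hS : Sᶜ.powerset = univ.filter (· ⊆ Sᶜ) := by ext; simp
  rw [eval, ← sum_filter_add_sum_filter_not univ (· ⊆ Sᶜ), hS,
    sum_eq_zero (s := univ.filter (¬ · ⊆ Sᶜ)) fun U hU => ?_, add_zero]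
  · exact sum_congr rfl fun U hU => by rw [quotient, if_pos (mem_filter.1 hU).2]
  · rw [quotient, if_neg (mem_filter.1 hU).2, zero_mul]

variable [DecidableEq R]

lemma terms_restrict_subset (b : Finset ι → R) (i : ι) (c : Bool) :
    terms (restrict b i c) ⊆ (terms b).image (·.erase i) := by
  intro U hU
  rw [mem_terms, restrict] at hU
  by_cases hiU : i ∈ U
  · simp [hiU] at hU
  rw [if_neg hiU] at hU
  by_cases hb : b U = 0
  · refine mem_image.2 ⟨insert i U, mem_terms.2 ?_, erase_insert hiU⟩
    cases c <;> simp_all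
  · exact mem_image.2 ⟨U, mem_terms.2 hb, erase_eq_of_notMem hiU⟩

lemma terms_restrict_false (b : Finset ι → R) (i : ι) :
    terms (restrict b i false) = (terms b).filter (i ∉ ·) := by
  ext U
  by_cases hiU : i ∈ U <;> simp [mem_terms, restrict, hiU]

lemma terms_pderiv_subset (b : Finset ι → R) (i : ι) :
    terms (pderiv b i) ⊆ ((terms b).filter (i ∈ ·)).image (·.erase i) := by
  intro U hU
  rw [mem_terms, pderiv] at hU
  split_ifs at hU with hiU
  · exact absurd rfl hU
  exact mem_image.2 ⟨insert i U, mem_filter.2 ⟨mem_terms.2 hU, mem_insert_self i U⟩,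
    erase_insert hiU⟩

lemma card_terms_restrict_le (b : Finset ι → R) (i : ι) (c : Bool) :
    #(terms (restrict b i c)) ≤ #(terms b) :=
  (card_le_card (terms_restrict_subset b i c)).trans card_image_le

lemma card_terms_restrict_false_add_card_terms_pderiv_le (b : Finset ι → R) (i : ι) :
    #(terms (restrict b i false)) + #(terms (pderiv b i)) ≤ #(terms b) := by
  rw [terms_restrict_false, ← card_filter_add_card_filter_not (s := terms b) (i ∈ ·), add_comm]
  exact Nat.add_le_add_right ((card_le_card (terms_pderiv_subset b i)).trans card_image_le) _

lemma exists_half_terms {b : Finset ι → R} {i : ι} (hb : b ∅ ≠ 0)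
    (hb₁ : restrict b i true ∅ = 0) :
    ∃ g : Finset ι → R, terms g ⊆ (terms b).image (·.erase i) ∧ g ∅ ≠ 0 ∧
      2 * #(terms g) ≤ #(terms b) ∧
      ∀ y, eval g y ≠ 0 → eval (restrict b i false) y ≠ 0 ∨ eval (restrict b i true) y ≠ 0 := by
  have hcard := card_terms_restrict_false_add_card_terms_pderiv_le b i
  rcases le_total #(terms (restrict b i false)) #(terms (pderiv b i)) with h | h
  · exact ⟨restrict b i false, terms_restrict_subset b i false, by simpa [restrict] using hb,
      by omega, fun y hy => Or.inl hy⟩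
  have hd : pderiv b i ∅ ≠ 0 := by
    intro hd
    simp only [restrict, pderiv, notMem_empty, if_false, if_true] at hb₁ hd
    rw [hd, add_zero] at hb₁
    exact hb hb₁
  refine ⟨pderiv b i, (terms_pderiv_subset b i).trans (image_subset_image (filter_subset _ _)),
    hd, by omega, fun y hy => ?_⟩
  rw [restrict_true, eval_add]
  by_contra! h
  exact hy (by simpa [h.1] using h.2)

lemma mem_terms_quotient {b : Finset ι → R} {S U : Finset ι} :
    U ∈ terms (quotient b S) ↔ U ⊆ Sᶜ ∧ S ∪ U ∈ terms b := by
  by_cases h : U ⊆ Sᶜ <;> simp [mem_terms, quotient, h]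

lemma card_terms_quotient_le (b : Finset ι → R) (S : Finset ι) :
    #(terms (quotient b S)) ≤ #(terms b) := by
  refine card_le_card_of_injOn (S ∪ ·) (fun U hU => (mem_terms_quotient.1 hU).2)
    fun U hU U' hU' h => ?_
  have hdisj : ∀ {V}, V ∈ terms (quotient b S) → Disjoint S V := fun hV =>
    subset_compl_iff_disjoint_left.1 (mem_terms_quotient.1 hV).1
  rw [← union_sdiff_cancel_left (hdisj hU), ← union_sdiff_cancel_left (hdisj hU')]
  exact congrArg (· \ S) h

end Multilinear

/-- Allowing `x = x'` makes the property stable under fixing a coordinate. -/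
def IsLocallySmooth {ι : Type*} [Fintype ι] [DecidableEq ι] (α : ℝ) (μ : (ι → Bool) → ℝ) :
    Prop :=
  ∀ x x', hammingDist x x' ≤ 1 → μ x ≤ α * μ x'

namespace IsLocallySmooth

variable {ι : Type*} [Fintype ι] [DecidableEq ι] {α : ℝ} {μ ν : (ι → Bool) → ℝ}

lemma comp_update (hμ : IsLocallySmooth α μ) (i : ι) (c : Bool) :
    IsLocallySmooth α fun x => μ (update x i c) :=
  fun x x' h => hμ _ _ ((hammingDist_update_update_le x x' i c).trans h)

lemma add (hμ : IsLocallySmooth α μ) (hν : IsLocallySmooth α ν) : IsLocallySmooth α (μ + ν) :=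
  fun x x' h => by simpa only [Pi.add_apply, mul_add] using add_le_add (hμ x x' h) (hν x x' h)

lemma one_div_mul_add_le (hμ : IsLocallySmooth α μ) (hα : 0 ≤ α) (x : ι → Bool) (i : ι)
    (c : Bool) :
    1 / (1 + α) * (μ (update x i false) + μ (update x i true)) ≤ μ (update x i c) := by
  rw [one_div_mul_eq_div, div_le_iff₀ (by linarith)]
  have := hμ (update x i !c) (update x i c) (hammingDist_update_update_le_one x i _ _)
  cases c <;> simp only [Bool.not_false, Bool.not_true] at this <;> linarith

lemma one_div_mul_two_mul_sum_le (hμ : IsLocallySmooth α μ) (hα : 0 ≤ α) (i : ι) (c : Bool) :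
    1 / (1 + α) * (2 * ∑ x, μ x) ≤ ∑ x, μ (update x i c) := by
  rw [two_mul_sum_eq_sum_update_add_sum_update μ i, ← sum_add_distrib, mul_sum]
  exact sum_le_sum fun x _ => hμ.one_div_mul_add_le hα x i c

lemma one_div_mul_sum_filter_le (hμ : IsLocallySmooth α μ) (hμ0 : ∀ x, 0 ≤ μ x) (hα : 0 ≤ α)
    (i : ι) {P P₀ P₁ : (ι → Bool) → Prop} [DecidablePred P] [DecidablePred P₀]
    [DecidablePred P₁] (hP : ∀ y, P y → P₀ y ∨ P₁ y) :
    1 / (1 + α) * ∑ y with P y, (μ (update y i false) + μ (update y i true)) ≤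
      ∑ y with P₀ y, μ (update y i false) + ∑ y with P₁ y, μ (update y i true) := by
  rw [mul_sum, sum_filter, sum_filter, sum_filter, ← sum_add_distrib]
  refine sum_le_sum fun y _ => ?_
  have h₀ := hμ0 (update y i false)
  have h₁ := hμ0 (update y i true)
  by_cases hy : P y
  · rcases hP y hy with hy₀ | hy₁
    · have := hμ.one_div_mul_add_le hα y i false
      simp only [hy, hy₀, if_true]
      split_ifs <;> linarith
    · have := hμ.one_div_mul_add_le hα y i true
      simp only [hy, hy₁, if_true]
      split_ifs <;> linarith
  · simp only [hy, if_false]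
    split_ifs <;> linarith

lemma of_hammingDist_eq_one (hα : 1 ≤ α) (hμ0 : ∀ x, 0 ≤ μ x)
    (hμ : ∀ x x', hammingDist x x' = 1 → μ x ≤ α * μ x') : IsLocallySmooth α μ := by
  intro x x' h
  rcases Nat.le_one_iff_eq_zero_or_eq_one.1 h with h0 | h1
  · rw [hammingDist_eq_zero.1 h0]
    exact le_mul_of_one_le_left (hμ0 x') hα
  · exact hμ x x' h1

end IsLocallySmooth

namespace Multilinear

variable {ι R : Type*} [Fintype ι] [DecidableEq ι] [CommSemiring R] [DecidableEq R]
  {α : ℝ} {μ : (ι → Bool) → ℝ}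

lemma two_mul_sum_eval_ne_zero (b : Finset ι → R) (i : ι) (μ : (ι → Bool) → ℝ) :
    2 * ∑ x with eval b x ≠ 0, μ x =
      ∑ x with eval (restrict b i false) x ≠ 0, μ (update x i false) +
        ∑ x with eval (restrict b i true) x ≠ 0, μ (update x i true) := by
  rw [sum_filter, sum_filter, sum_filter, two_mul, ← two_nsmul,
    ← sum_update_false_add_update_true i, ← sum_add_distrib]
  simp only [eval_update]

lemma le_sum_eval_ne_zero_of_le_restrict (hα : 0 ≤ α) (hμ0 : ∀ x, 0 ≤ μ x)
    {b : Finset ι → R} {i : ι} (hpos : ∀ c, 0 < #(terms (restrict b i c)))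
    (h : ∀ c, (1 / (1 + α)) ^ Real.logb 2 #(terms (restrict b i c)) * ∑ x, μ (update x i c) ≤
      ∑ x with eval (restrict b i c) x ≠ 0, μ (update x i c)) :
    (1 / (1 + α)) ^ Real.logb 2 #(terms b) * ∑ x, μ x ≤ ∑ x with eval b x ≠ 0, μ x := by
  have hq0 : 0 < 1 / (1 + α) := by positivity
  have hq1 : 1 / (1 + α) ≤ 1 := by rw [div_le_one (by linarith)]; linarith
  have hc : ∀ c, (1 / (1 + α)) ^ Real.logb 2 #(terms b) * ∑ x, μ (update x i c) ≤
      ∑ x with eval (restrict b i c) x ≠ 0, μ (update x i c) := fun c =>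
    (mul_le_mul_of_nonneg_right
      (rpow_logb_two_le_of_le hq0 hq1 (hpos c) (card_terms_restrict_le b i c))
      (sum_nonneg fun x _ => hμ0 _)).trans (h c)
  suffices 2 * ((1 / (1 + α)) ^ Real.logb 2 #(terms b) * ∑ x, μ x) ≤
      2 * ∑ x with eval b x ≠ 0, μ x by linarith
  rw [two_mul_sum_eval_ne_zero b i μ, mul_left_comm, two_mul_sum_eq_sum_update_add_sum_update μ i,
    mul_add]
  exact add_le_add (hc false) (hc true)

lemma le_sum_eval_ne_zero_of_le_half (hα : 0 ≤ α) (hμ0 : ∀ x, 0 ≤ μ x)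
    (hμ : IsLocallySmooth α μ) {b g : Finset ι → R} {i : ι} (hg : 0 < #(terms g))
    (hg2 : 2 * #(terms g) ≤ #(terms b))
    (hgP : ∀ y, eval g y ≠ 0 → eval (restrict b i false) y ≠ 0 ∨ eval (restrict b i true) y ≠ 0)
    (h : (1 / (1 + α)) ^ Real.logb 2 #(terms g) *
        ∑ x, (μ (update x i false) + μ (update x i true)) ≤
      ∑ x with eval g x ≠ 0, (μ (update x i false) + μ (update x i true))) :
    (1 / (1 + α)) ^ Real.logb 2 #(terms b) * ∑ x, μ x ≤ ∑ x with eval b x ≠ 0, μ x := by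
  set q := 1 / (1 + α)
  have hq0 : 0 < q := by positivity
  have hq1 : q ≤ 1 := by rw [div_le_one (by linarith)]; linarith
  have hμ2 : 0 ≤ 2 * ∑ x, μ x := mul_nonneg zero_le_two (sum_nonneg fun x _ => hμ0 x)
  suffices 2 * (q ^ Real.logb 2 #(terms b) * ∑ x, μ x) ≤ 2 * ∑ x with eval b x ≠ 0, μ x by
    linarith
  calc 2 * (q ^ Real.logb 2 #(terms b) * ∑ x, μ x)
      ≤ q * q ^ Real.logb 2 #(terms g) * (2 * ∑ x, μ x) := by
        rw [mul_left_comm]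
        exact mul_le_mul_of_nonneg_right (rpow_logb_two_le_mul_of_two_mul_le hq0 hq1 hg hg2) hμ2
    _ ≤ q * ∑ y with eval g y ≠ 0, (μ (update y i false) + μ (update y i true)) := by
        rw [mul_assoc, two_mul_sum_eq_sum_update_add_sum_update μ i, ← sum_add_distrib]
        exact mul_le_mul_of_nonneg_left h hq0.le
    _ ≤ _ := two_mul_sum_eval_ne_zero b i μ ▸ hμ.one_div_mul_sum_filter_le hμ0 hα i hgP

theorem le_sum_eval_ne_zero_of_apply_empty (hα : 0 ≤ α) (V : Finset ι) {b : Finset ι → R}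
    (hV : ∀ U ∈ terms b, U ⊆ V) (hb : b ∅ ≠ 0) (hμ0 : ∀ x, 0 ≤ μ x)
    (hμ : IsLocallySmooth α μ) :
    (1 / (1 + α)) ^ Real.logb 2 #(terms b) * ∑ x, μ x ≤ ∑ x with eval b x ≠ 0, μ x := by
  induction V using Finset.induction_on generalizing b μ with
  | empty =>
    rw [filter_true_of_mem fun x _ => by rwa [eval_eq_apply_empty b hV]]
    refine mul_le_of_le_one_left (sum_nonneg fun x _ => hμ0 x) (Real.rpow_le_one
      (by positivity) ?_ (Real.logb_nonneg one_lt_two ?_))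
    · rw [div_le_one (by linarith)]; linarith
    · exact_mod_cast one_le_card.2 ⟨∅, mem_terms.2 hb⟩
  | insert i V _ ih =>
    have hVc : ∀ c, ∀ U ∈ terms (restrict b i c), U ⊆ V := fun c =>
      forall_subset_of_subset_image_erase (terms_restrict_subset b i c) hV
    by_cases hb₁ : restrict b i true ∅ = 0
    · obtain ⟨g, hgV, hg0, hg2, hgP⟩ := exists_half_terms hb hb₁
      exact le_sum_eval_ne_zero_of_le_half hα hμ0 hμ (card_pos.2 ⟨∅, mem_terms.2 hg0⟩) hg2 hgP
        (ih (forall_subset_of_subset_image_erase hgV hV) hg0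
          (fun y => add_nonneg (hμ0 _) (hμ0 _))
          ((hμ.comp_update i false).add (hμ.comp_update i true)))
    · have hbc : ∀ c, restrict b i c ∅ ≠ 0 := by
        rintro (_ | _)
        exacts [by simpa [restrict] using hb, hb₁]
      exact le_sum_eval_ne_zero_of_le_restrict hα hμ0
        (fun c => card_pos.2 ⟨∅, mem_terms.2 (hbc c)⟩)
        fun c => ih (hVc c) (hbc c) (fun _ => hμ0 _) (hμ.comp_update i c)

lemma le_sum_eval_ne_zero_of_le_restrict_true (hα : 0 ≤ α) (hμ0 : ∀ x, 0 ≤ μ x)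
    (hμ : IsLocallySmooth α μ) {b : Finset ι → R} {i : ι} {k : ℕ}
    (hpos : 0 < #(terms (restrict b i true)))
    (h : (1 / (1 + α)) ^ ((k : ℝ) + Real.logb 2 #(terms (restrict b i true))) *
        ∑ x, μ (update x i true) ≤
      ∑ x with eval (restrict b i true) x ≠ 0, μ (update x i true)) :
    (1 / (1 + α)) ^ (((k + 1 : ℕ) : ℝ) + Real.logb 2 #(terms b)) * ∑ x, μ x ≤
      ∑ x with eval b x ≠ 0, μ x := by
  set q := 1 / (1 + α)
  have hq0 : 0 < q := by positivity
  have hq1 : q ≤ 1 := by rw [div_le_one (by linarith)]; linarith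
  have hexp : q ^ (((k + 1 : ℕ) : ℝ) + Real.logb 2 #(terms b)) ≤
      q ^ ((k : ℝ) + Real.logb 2 #(terms (restrict b i true))) * q := by
    have hlog := Real.logb_le_logb_of_le one_lt_two (by exact_mod_cast hpos)
      (by exact_mod_cast card_terms_restrict_le b i true : (#(terms (restrict b i true)) : ℝ) ≤
        #(terms b))
    rw [← Real.rpow_add_one hq0.ne']
    exact Real.antitone_rpow_of_base_le_one hq0 hq1 (by push_cast; linarith)
  suffices 2 * (q ^ (((k + 1 : ℕ) : ℝ) + Real.logb 2 #(terms b)) * ∑ x, μ x) ≤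
      2 * ∑ x with eval b x ≠ 0, μ x by linarith
  calc 2 * (q ^ (((k + 1 : ℕ) : ℝ) + Real.logb 2 #(terms b)) * ∑ x, μ x)
      ≤ q ^ ((k : ℝ) + Real.logb 2 #(terms (restrict b i true))) * q * (2 * ∑ x, μ x) := by
        rw [mul_left_comm]
        exact mul_le_mul_of_nonneg_right hexp
          (mul_nonneg zero_le_two (sum_nonneg fun x _ => hμ0 x))
    _ ≤ q ^ ((k : ℝ) + Real.logb 2 #(terms (restrict b i true))) * ∑ x, μ (update x i true) := by
        rw [mul_assoc]
        exact mul_le_mul_of_nonneg_left (hμ.one_div_mul_two_mul_sum_le hα i true)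
          (Real.rpow_nonneg hq0.le _)
    _ ≤ ∑ x with eval (restrict b i true) x ≠ 0, μ (update x i true) := h
    _ ≤ 2 * ∑ x with eval b x ≠ 0, μ x := by
        rw [two_mul_sum_eval_ne_zero b i μ]
        exact le_add_of_nonneg_left (sum_nonneg fun _ _ => hμ0 _)

theorem le_sum_eval_ne_zero (hα : 0 ≤ α) {b : Finset ι → R} {T : Finset ι} (hT : b T ≠ 0)
    (hμ0 : ∀ x, 0 ≤ μ x) (hμ : IsLocallySmooth α μ) :
    (1 / (1 + α)) ^ ((#T : ℝ) + Real.logb 2 #(terms b)) * ∑ x, μ x ≤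
      ∑ x with eval b x ≠ 0, μ x := by
  induction T using Finset.strongInduction generalizing b μ with
  | H T ih =>
  rcases T.eq_empty_or_nonempty with rfl | ⟨i, hi⟩
  · rw [card_empty, Nat.cast_zero, zero_add]
    exact le_sum_eval_ne_zero_of_apply_empty hα univ (fun U _ => subset_univ U) hT hμ0 hμ
  rw [← card_erase_add_one hi]
  by_cases hb' : b (T.erase i) ≠ 0
  · have hq1 : 1 / (1 + α) ≤ 1 := by rw [div_le_one (by linarith)]; linarith
    exact (mul_le_mul_of_nonneg_right
      (Real.antitone_rpow_of_base_le_one (by positivity) hq1 (by push_cast; linarith))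
      (sum_nonneg fun x _ => hμ0 x)).trans (ih _ (erase_ssubset hi) hb' hμ0 hμ)
  have hb₁ : restrict b i true (T.erase i) ≠ 0 := by
    simpa [restrict, insert_erase hi, not_not.1 hb'] using hT
  exact le_sum_eval_ne_zero_of_le_restrict_true hα hμ0 hμ (card_pos.2 ⟨_, mem_terms.2 hb₁⟩)
    (ih _ (erase_ssubset hi) hb₁ (fun _ => hμ0 _) (hμ.comp_update i true))

end Multilinear

open Multilinear in
theorem quotient_poly_nonzero_prob (n t d : ℕ)
    (c : Finset (Fin n) → ℝ)
    (hsparse : (univ.filter (fun T : Finset (Fin n) => c T ≠ 0)).card ≤ t)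
    (S : Finset (Fin n)) (hSd : S.card ≤ d)
    (hmono : ∃ T ∈ Sᶜ.powerset, c (S ∪ T) ≠ 0 ∧ T.card ≤ d - S.card)
    (α : ℝ) (hα : 1 ≤ α)
    (D : (Fin n → Bool) → ℝ) (hD0 : ∀ x, 0 ≤ D x) (hD1 : ∑ x, D x = 1)
    (hsmooth : ∀ x x' : Fin n → Bool, hammingDist x x' = 1 → D x ≤ α * D x') :
    (1 / (1 + α)) ^ ((d : ℝ) - S.card + Real.logb 2 t) ≤
      ∑ x ∈ univ.filter (fun x : Fin n → Bool =>
        (∑ T ∈ Sᶜ.powerset, c (S ∪ T) * ∏ i ∈ T, (if x i then (1 : ℝ) else 0)) ≠ 0),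
        D x := by
  obtain ⟨T, hTS, hcT, hTd⟩ := hmono
  have hT : quotient c S T ≠ 0 := by rwa [quotient, if_pos (mem_powerset.1 hTS)]
  have hterms : #(terms (quotient c S)) ≤ t := (card_terms_quotient_le c S).trans hsparse
  have hexp : (#T : ℝ) + Real.logb 2 #(terms (quotient c S)) ≤ d - #S + Real.logb 2 t :=
    add_le_add (by rw [← Nat.cast_sub hSd]; exact_mod_cast hTd)
      (Real.logb_le_logb_of_le one_lt_two (by exact_mod_cast card_pos.2 ⟨T, mem_terms.2 hT⟩)
        (by exact_mod_cast hterms))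
  have hbound := le_sum_eval_ne_zero (by linarith) hT hD0
    (IsLocallySmooth.of_hammingDist_eq_one hα hD0 hsmooth)
  rw [hD1, mul_one] at hbound
  simp only [eval_quotient] at hbound
  have hq0 : 0 < 1 / (1 + α) := by positivity
  have hq1 : 1 / (1 + α) ≤ 1 := by rw [div_le_one (by linarith)]; linarith
  exact (Real.antitone_rpow_of_base_le_one hq0 hq1 hexp).trans hbound
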